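/- arXiv:2511.19006 — 3 statements merged into one kernel-verified Lean document; each statement's English description precedes it below -/
import Mathlib

section
/- Let ŷ ∈ [-1,1] and α ∈ [0,1]. The cubic equation ŷ(1+3s²) = s(3−2α+(2α+1)s²), i.e. the polynomial (2α+1)s³ − 3ŷs² + (3−2α)s − ŷ, has exactly one real root s_α, and this root lies in the interval [−1,1]. -/
lemma dct_g_strictMono (yhat α : ℝ)
    (hy : yhat ∈ Set.Icc (-1 : ℝ) 1) (hα : α ∈ Set.Icc (0 : ℝ) 1) :
    StrictMono (fun s : ℝ => s * (3 - 2 * α + (2 * α + 1) * s ^ 2)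
      - yhat * (1 + 3 * s ^ 2)) := by
  obtain ⟨hy1, hy2⟩ := hy
  obtain ⟨ha1, ha2⟩ := hα
  intro b a hba
  simp only
  have hΦ : 0 < (3*(2*α+1)/4)*(a+b)^2 - 3*yhat*(a+b) + (4-(2*α+1))
      + ((2*α+1)/4)*(a-b)^2 := by
    nlinarith [sq_nonneg (3*(2*α+1)*(a+b) - 6*yhat), sq_nonneg (a-b),
      mul_nonneg ha1 (sub_nonneg.2 ha2),
      mul_nonneg (sub_nonneg.2 hy2) (sub_nonneg.2 (neg_le.1 hy1)),
      mul_pos (sub_pos.2 hba) (sub_pos.2 hba),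
      mul_nonneg (mul_nonneg ha1 ha1) (sq_nonneg (a-b))]
  have key : a * (3 - 2 * α + (2 * α + 1) * a ^ 2) - yhat * (1 + 3 * a ^ 2)
      - (b * (3 - 2 * α + (2 * α + 1) * b ^ 2) - yhat * (1 + 3 * b ^ 2))
      = (a - b) * ((3*(2*α+1)/4)*(a+b)^2 - 3*yhat*(a+b) + (4-(2*α+1))
      + ((2*α+1)/4)*(a-b)^2) := by ring
  nlinarith [mul_pos (sub_pos.2 hba) hΦ]

/-- For ŷ ∈ [-1,1] and α ∈ [0,1], the cubic equation
ŷ(1+3s²) = s(3−2α+(2α+1)s²) has exactly one real root, and this root lies in [−1,1]. -/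
theorem dct_cubic_unique_root_in_Icc (yhat α : ℝ)
    (hy : yhat ∈ Set.Icc (-1 : ℝ) 1) (hα : α ∈ Set.Icc (0 : ℝ) 1) :
    (∃! s : ℝ, yhat * (1 + 3 * s ^ 2) = s * (3 - 2 * α + (2 * α + 1) * s ^ 2)) ∧
    (∀ s : ℝ, yhat * (1 + 3 * s ^ 2) = s * (3 - 2 * α + (2 * α + 1) * s ^ 2) →
      s ∈ Set.Icc (-1 : ℝ) 1) := by
  set g : ℝ → ℝ := fun s => s * (3 - 2 * α + (2 * α + 1) * s ^ 2) - yhat * (1 + 3 * s ^ 2)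
    with hg
  have hmono : StrictMono g := dct_g_strictMono yhat α hy hα
  obtain ⟨hy1, hy2⟩ := hy
  have hg1 : g 1 = 4 - 4 * yhat := by simp [hg]; ring
  have hgm1 : g (-1) = -4 - 4 * yhat := by simp [hg]; ring
  have hcont : ContinuousOn g (Set.Icc (-1 : ℝ) 1) := by
    apply Continuous.continuousOn; fun_prop
  have hiv := intermediate_value_Icc (by norm_num : (-1 : ℝ) ≤ 1) hcont
  have h0 : (0 : ℝ) ∈ Set.Icc (g (-1)) (g 1) := by
    rw [hg1, hgm1]; constructor <;> linarith
  obtain ⟨s, hsmem, hs0⟩ := hiv h0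
  have hroot : yhat * (1 + 3 * s ^ 2) = s * (3 - 2 * α + (2 * α + 1) * s ^ 2) := by
    have : g s = 0 := hs0
    simp only [hg] at this; linarith
  have hIn : ∀ t : ℝ, yhat * (1 + 3 * t ^ 2) = t * (3 - 2 * α + (2 * α + 1) * t ^ 2) →
      t ∈ Set.Icc (-1 : ℝ) 1 := by
    intro t ht
    have hgt : g t = 0 := by simp only [hg]; linarith
    constructor
    · by_contra h
      push_neg at h
      have := hmono h
      rw [hgt, hgm1] at this; linarith
    · by_contra h
      push_neg at h
      have := hmono h
      rw [hg1, hgt] at this; linarith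
  refine ⟨⟨s, hroot, ?_⟩, hIn⟩
  intro t ht
  have hgt : g t = 0 := by simp only [hg]; linarith
  have hgs : g s = 0 := hs0
  exact hmono.injective (hgt.trans hgs.symm)
end

section
/- Let ŷ ∈ [−1,1], α ∈ [0,1), and let s_α ∈ ℝ satisfy ŷ(1+3s_α²) = s_α(3−2α+(2α+1)s_α²). With β_α = (1−α)/(1+3s_α²) and q_α(s) = ŷ + α(s−s_α) + β_α(s−s_α)³, the function q_α is strictly increasing on ℝ (its derivative q_α′(s) = α + 3β_α(s−s_α)² is nonnegative, with β_α > 0), and q_α restricts to a bijection of [−1,1] onto [−1,1]. -/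
/-- For ŷ ∈ [−1,1], α ∈ [0,1), s_α a root of the DCT cubic,
β_α = (1−α)/(1+3s_α²) and q_α(s) = ŷ + α(s−s_α) + β_α(s−s_α)³, the map q_α is strictly
increasing on ℝ (with derivative α + 3β_α(s−s_α)² ≥ 0 and β_α > 0) and restricts to a
bijection of [−1,1] onto [−1,1]. -/
theorem dct_strictMono_bijOn (yhat α sα : ℝ)
    (hy : yhat ∈ Set.Icc (-1 : ℝ) 1) (hα : α ∈ Set.Ico (0 : ℝ) 1)
    (hs : yhat * (1 + 3 * sα ^ 2) = sα * (3 - 2 * α + (2 * α + 1) * sα ^ 2))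
    (β : ℝ) (hβ : β = (1 - α) / (1 + 3 * sα ^ 2))
    (q : ℝ → ℝ) (hq : ∀ s, q s = yhat + α * (s - sα) + β * (s - sα) ^ 3) :
    0 < β ∧
    (∀ s : ℝ, HasDerivAt q (α + 3 * β * (s - sα) ^ 2) s ∧ 0 ≤ α + 3 * β * (s - sα) ^ 2) ∧
    StrictMono q ∧
    Set.BijOn q (Set.Icc (-1 : ℝ) 1) (Set.Icc (-1 : ℝ) 1) := by
  have hden : (0:ℝ) < 1 + 3 * sα ^ 2 := by positivity
  have hβpos : 0 < β := by
    rw [hβ]; exact div_pos (by linarith [hα.2]) hden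
  have hqe : q = fun s => yhat + α * (s - sα) + β * (s - sα) ^ 3 := funext hq
  subst hqe
  have hβmul : β * (1 + 3 * sα ^ 2) = 1 - α := by
    rw [hβ]; field_simp
  have hm1 : yhat + α * (-1 - sα) + β * (-1 - sα) ^ 3 = -1 := by
    have h : (yhat + α * (-1 - sα) + β * (-1 - sα) ^ 3 + 1) * (1 + 3 * sα ^ 2) = 0 := by
      linear_combination hs + (-1 - sα) ^ 3 * hβmul
    rcases mul_eq_zero.mp h with h' | h'
    · linarith
    · linarith
  have hp1 : yhat + α * (1 - sα) + β * (1 - sα) ^ 3 = 1 := by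
    have h : (yhat + α * (1 - sα) + β * (1 - sα) ^ 3 - 1) * (1 + 3 * sα ^ 2) = 0 := by
      linear_combination hs + (1 - sα) ^ 3 * hβmul
    rcases mul_eq_zero.mp h with h' | h'
    · linarith
    · linarith
  have hsm : StrictMono (fun s => yhat + α * (s - sα) + β * (s - sα) ^ 3) := by
    have h1 : StrictMono (fun s : ℝ => β * (s - sα) ^ 3) := by
      have : StrictMono (fun s : ℝ => (s - sα) ^ 3) :=
        (Odd.strictMono_pow ⟨1, by norm_num⟩).comp (fun a b hab => by simpa using hab)
      exact fun a b hab => by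
        exact mul_lt_mul_of_pos_left (this hab) hβpos
    have h2 : Monotone (fun s : ℝ => yhat + α * (s - sα)) := by
      intro a b hab
      have := mul_le_mul_of_nonneg_left (sub_le_sub_right hab sα) hα.1
      simpa using by linarith
    intro a b hab
    have := h1 hab
    have := h2 hab.le
    simp only at *
    linarith
  refine ⟨hβpos, fun s => ⟨?_, ?_⟩, hsm, ?_⟩
  · have h1 : HasDerivAt (fun s : ℝ => s - sα) 1 s := (hasDerivAt_id s).sub_const sα
    have hd : HasDerivAt (fun s => yhat + α * (s - sα) + β * (s - sα) ^ 3)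
        (0 + α * 1 + β * (3 * (s - sα) ^ 2 * 1)) s :=
      ((hasDerivAt_const s yhat).add (h1.const_mul α)).add ((h1.pow 3).const_mul β)
    convert hd using 1
    ring
  · have : 0 ≤ 3 * β * (s - sα) ^ 2 := by positivity
    linarith [hα.1]
  · have hcont : Continuous (fun s => yhat + α * (s - sα) + β * (s - sα) ^ 3) := by
      continuity
    refine ⟨?_, hsm.injective.injOn, ?_⟩
    · intro s hsicc
      have h1 := hsm.monotone hsicc.1
      have h2 := hsm.monotone hsicc.2
      simp only [Set.mem_Icc]
      constructor <;> linarith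
    · intro y hy'
      have := intermediate_value_Icc (by norm_num : (-1:ℝ) ≤ 1) hcont.continuousOn
      rw [hm1, hp1] at this
      exact this hy'
end

section
/- Let Ω ⊆ ℝ³ be open, η > 0, and let (u, p) and (u′, p′) be two pairs with u, u′ : Ω → ℝ³ twice continuously differentiable and p, p′ : Ω → ℝ continuously differentiable, each satisfying the Stokes system −ηΔu + ∇p = 0, div u = 0 (respectively with primes). Define the stress tensors σ_ij = −p δ_ij + η(∂_j u_i + ∂_i u_j) and σ′_ij = −p′ δ_ij + η(∂_j u′_i + ∂_i u′_j). Then at every point of Ω the Lorentz reciprocity identity Σ_{i=1}^{3} Σ_{j=1}^{3} ∂_j ( u′_i σ_ij − u_i σ′_ij ) = 0 holds. -/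
/-!
For a Stokes solution the stress is divergence free:
`∑ⱼ ∂ⱼσᵢⱼ = -∂ᵢp + ηΔuᵢ + η ∂ᵢ(div u) = 0`, the last term after exchanging the order of
differentiation. So by the product rule `∑ⱼ ∂ⱼ(u'ᵢσᵢⱼ) = ∑ⱼ ∂ⱼu'ᵢ σᵢⱼ`. Summed over `i`, the
pressure contributes `-p div u' = 0`, and what remains, `η ∑ᵢⱼ ∂ⱼu'ᵢ (∂ⱼuᵢ + ∂ᵢuⱼ)`, is
symmetric in `u` and `u'`.
-/

/-- Partial derivative ∂_j f(x) of a scalar field on ℝ³ (Euclidean). -/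
noncomputable def pd (f : EuclideanSpace ℝ (Fin 3) → ℝ) (j : Fin 3)
    (x : EuclideanSpace ℝ (Fin 3)) : ℝ :=
  fderiv ℝ f x (EuclideanSpace.single j 1)

open Finset Filter Topology

local notation "ℝ³" => EuclideanSpace ℝ (Fin 3)

section PartialDerivative

variable {f g : ℝ³ → ℝ} {x : ℝ³}

theorem pd_add (hf : DifferentiableAt ℝ f x) (hg : DifferentiableAt ℝ g x) (j : Fin 3) :
    pd (fun z => f z + g z) j x = pd f j x + pd g j x := by
  simp [pd, fderiv_fun_add hf hg]

theorem pd_sub (hf : DifferentiableAt ℝ f x) (hg : DifferentiableAt ℝ g x) (j : Fin 3) :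
    pd (fun z => f z - g z) j x = pd f j x - pd g j x := by
  simp [pd, fderiv_fun_sub hf hg]

theorem pd_mul (hf : DifferentiableAt ℝ f x) (hg : DifferentiableAt ℝ g x) (j : Fin 3) :
    pd (fun z => f z * g z) j x = pd f j x * g x + f x * pd g j x := by
  simp only [pd, fderiv_fun_mul hf hg, add_apply, smul_apply, smul_eq_mul]
  ring

theorem pd_const_mul (hf : DifferentiableAt ℝ f x) (c : ℝ) (j : Fin 3) :
    pd (fun z => c * f z) j x = c * pd f j x := by
  simp [pd, fderiv_const_mul hf c]

theorem pd_neg (j : Fin 3) : pd (fun z => -f z) j x = -pd f j x := by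
  simp [pd, fderiv_fun_neg]

theorem pd_mul_const (hf : DifferentiableAt ℝ f x) (c : ℝ) (j : Fin 3) :
    pd (fun z => f z * c) j x = pd f j x * c := by
  simpa only [mul_comm] using pd_const_mul hf c j

theorem pd_sum {ι : Type*} (s : Finset ι) {F : ι → ℝ³ → ℝ}
    (hF : ∀ i ∈ s, DifferentiableAt ℝ (F i) x) (j : Fin 3) :
    pd (fun z => ∑ i ∈ s, F i z) j x = ∑ i ∈ s, pd (F i) j x := by
  simp [pd, fderiv_fun_sum hF]

theorem pd_eq_zero_of_eventually_eq_zero (hf : ∀ᶠ z in 𝓝 x, f z = 0) (j : Fin 3) :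
    pd f j x = 0 := by
  have hf : f =ᶠ[𝓝 x] fun _ => 0 := hf
  simp [pd, hf.fderiv_eq]

theorem ContDiffAt.contDiffAt_pd {n : WithTop ℕ∞} (hf : ContDiffAt ℝ (n + 1) f x) (j : Fin 3) :
    ContDiffAt ℝ n (pd f j) x :=
  (hf.fderiv_right le_rfl).clm_apply contDiffAt_const

theorem pd_pd_comm (hf : ContDiffAt ℝ 2 f x) (i j : Fin 3) :
    pd (pd f i) j x = pd (pd f j) i x := by
  have hf' : DifferentiableAt ℝ (fderiv ℝ f) x :=
    (hf.fderiv_right (m := 1) le_rfl).differentiableAt one_ne_zero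
  have hsymm := hf.isSymmSndFDerivAt (by simp)
  unfold pd
  simp [fderiv_clm_apply hf' (differentiableAt_const _), hsymm.eq]

theorem ContDiffAt.differentiableAt_pd_apply {u : ℝ³ → ℝ³} (hu : ContDiffAt ℝ 2 u x)
    (i j : Fin 3) : DifferentiableAt ℝ (pd (fun w => u w i) j) x :=
  (((contDiffAt_piLp 2).1 hu i).contDiffAt_pd (n := 1) j).differentiableAt one_ne_zero

end PartialDerivative

theorem Finset.sum_sum_mul_add_transpose_comm {ι R : Type*} [Fintype ι] [CommSemiring R]
    (A B : ι → ι → R) :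
    ∑ i, ∑ j, A i j * (B i j + B j i) = ∑ i, ∑ j, B i j * (A i j + A j i) := by
  simp only [mul_add, sum_add_distrib]
  rw [sum_comm (f := fun i j => A i j * B j i)]
  simp only [mul_comm, add_comm]

namespace Stokes

noncomputable def divergence (u : ℝ³ → ℝ³) (x : ℝ³) : ℝ :=
  ∑ i, pd (fun z => u z i) i x

noncomputable def stress (η : ℝ) (p : ℝ³ → ℝ) (u : ℝ³ → ℝ³) (x : ℝ³) (i j : Fin 3) : ℝ :=
  -(p x) * (if i = j then (1 : ℝ) else 0)
    + η * (pd (fun w => u w i) j x + pd (fun w => u w j) i x)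

/-- The divergence has to vanish on a neighbourhood since its gradient enters `∑ⱼ ∂ⱼσᵢⱼ`. -/
structure IsLocalSolution (η : ℝ) (u : ℝ³ → ℝ³) (p : ℝ³ → ℝ) (x : ℝ³) : Prop where
  contDiffAt_velocity : ContDiffAt ℝ 2 u x
  differentiableAt_pressure : DifferentiableAt ℝ p x
  momentum : ∀ i, -η * (∑ j, pd (pd (fun w => u w i) j) j x) + pd p i x = 0
  divergence_eventually_eq_zero : ∀ᶠ z in 𝓝 x, divergence u z = 0

theorem sum_sum_pd_mul_stress (η : ℝ) (p : ℝ³ → ℝ) (u v : ℝ³ → ℝ³) (x : ℝ³) :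
    ∑ i, ∑ j, pd (fun z => v z i) j x * stress η p u x i j
      = -(p x) * divergence v x
        + η * ∑ i, ∑ j,
            pd (fun z => v z i) j x * (pd (fun w => u w i) j x + pd (fun w => u w j) i x) := by
  simp [stress, divergence, mul_add, sum_add_distrib, mul_sum, mul_left_comm, mul_comm (p x)]

variable {η : ℝ} {u u' : ℝ³ → ℝ³} {p p' : ℝ³ → ℝ} {x : ℝ³}

theorem pd_stress (hu : ContDiffAt ℝ 2 u x) (hp : DifferentiableAt ℝ p x) (i j k : Fin 3) :
    pd (fun z => stress η p u z i j) k x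
      = -(if i = j then 1 else 0) * pd p k x
        + η * (pd (pd (fun w => u w i) j) k x + pd (pd (fun w => u w j) i) k x) := by
  have hij := hu.differentiableAt_pd_apply i j
  have hji := hu.differentiableAt_pd_apply j i
  simp only [stress]
  rw [pd_add (hp.fun_neg.mul_const _) ((hij.fun_add hji).const_mul η),
    pd_mul_const hp.fun_neg, pd_neg, pd_const_mul (hij.fun_add hji), pd_add hij hji]
  ring

theorem sum_pd_pd_eq_pd_divergence (hu : ContDiffAt ℝ 2 u x) (i : Fin 3) :
    ∑ j, pd (pd (fun w => u w j) i) j x = pd (divergence u) i x :=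
  calc ∑ j, pd (pd (fun w => u w j) i) j x = ∑ j, pd (pd (fun w => u w j) j) i x :=
        sum_congr rfl fun j _ => pd_pd_comm ((contDiffAt_piLp 2).1 hu j) i j
    _ = pd (divergence u) i x :=
        (pd_sum univ (fun j _ => hu.differentiableAt_pd_apply j j) i).symm

namespace IsLocalSolution

theorem sum_pd_stress (h : IsLocalSolution η u p x) (i : Fin 3) :
    ∑ j, pd (fun z => stress η p u z i j) j x = 0 := by
  have hdiv : pd (divergence u) i x = 0 :=
    pd_eq_zero_of_eventually_eq_zero h.divergence_eventually_eq_zero i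
  calc ∑ j, pd (fun z => stress η p u z i j) j x
      = -pd p i x + η * ∑ j, pd (pd (fun w => u w i) j) j x
          + η * ∑ j, pd (pd (fun w => u w j) i) j x := by
        simp [pd_stress h.contDiffAt_velocity h.differentiableAt_pressure, sum_add_distrib, mul_add,
          mul_sum, add_assoc]
    _ = 0 := by
        rw [sum_pd_pd_eq_pd_divergence h.contDiffAt_velocity, hdiv]
        linarith [h.momentum i]

theorem differentiableAt_stress (h : IsLocalSolution η u p x) (i j : Fin 3) :
    DifferentiableAt ℝ (fun z => stress η p u z i j) x := by
  have := h.differentiableAt_pressure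
  have := h.contDiffAt_velocity.differentiableAt_pd_apply i j
  have := h.contDiffAt_velocity.differentiableAt_pd_apply j i
  unfold stress
  fun_prop

theorem sum_pd_mul_stress (h : IsLocalSolution η u p x) {v : ℝ³ → ℝ}
    (hv : DifferentiableAt ℝ v x) (i : Fin 3) :
    ∑ j, pd (fun z => v z * stress η p u z i j) j x = ∑ j, pd v j x * stress η p u x i j := by
  simp_rw [pd_mul hv (h.differentiableAt_stress i _)]
  rw [sum_add_distrib, ← mul_sum, h.sum_pd_stress, mul_zero, add_zero]

theorem sum_pd_mul_stress_sub (h : IsLocalSolution η u p x) (h' : IsLocalSolution η u' p' x)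
    (i : Fin 3) :
    ∑ j, pd (fun z => u' z i * stress η p u z i j - u z i * stress η p' u' z i j) j x
      = ∑ j, (pd (fun z => u' z i) j x * stress η p u x i j
          - pd (fun z => u z i) j x * stress η p' u' x i j) := by
  have hu := ((contDiffAt_piLp 2).1 h.contDiffAt_velocity i).differentiableAt (by norm_num)
  have hu' := ((contDiffAt_piLp 2).1 h'.contDiffAt_velocity i).differentiableAt (by norm_num)
  rw [sum_congr rfl fun j _ => pd_sub (hu'.fun_mul (h.differentiableAt_stress i j))
      (hu.fun_mul (h'.differentiableAt_stress i j)) j,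
    sum_sub_distrib, h.sum_pd_mul_stress hu', h'.sum_pd_mul_stress hu, sum_sub_distrib]

end IsLocalSolution

end Stokes

open Stokes

theorem lorentz_reciprocity_general
    (Ω : Set (EuclideanSpace ℝ (Fin 3))) (hΩ : IsOpen Ω) (η : ℝ)
    (u u' : EuclideanSpace ℝ (Fin 3) → EuclideanSpace ℝ (Fin 3))
    (p p' : EuclideanSpace ℝ (Fin 3) → ℝ)
    (hu : ContDiffOn ℝ 2 u Ω) (hu' : ContDiffOn ℝ 2 u' Ω)
    (hp : ContDiffOn ℝ 1 p Ω) (hp' : ContDiffOn ℝ 1 p' Ω)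
    (hstokes : ∀ x ∈ Ω, ∀ i : Fin 3,
      -η * (∑ j : Fin 3, pd (fun z => pd (fun w => u w i) j z) j x) + pd p i x = 0)
    (hdiv : ∀ x ∈ Ω, ∑ i : Fin 3, pd (fun z => u z i) i x = 0)
    (hstokes' : ∀ x ∈ Ω, ∀ i : Fin 3,
      -η * (∑ j : Fin 3, pd (fun z => pd (fun w => u' w i) j z) j x) + pd p' i x = 0)
    (hdiv' : ∀ x ∈ Ω, ∑ i : Fin 3, pd (fun z => u' z i) i x = 0)
    (σ σ' : EuclideanSpace ℝ (Fin 3) → Fin 3 → Fin 3 → ℝ)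
    (hσ : ∀ x, ∀ i j : Fin 3, σ x i j =
      -(p x) * (if i = j then (1 : ℝ) else 0)
        + η * (pd (fun w => u w i) j x + pd (fun w => u w j) i x))
    (hσ' : ∀ x, ∀ i j : Fin 3, σ' x i j =
      -(p' x) * (if i = j then (1 : ℝ) else 0)
        + η * (pd (fun w => u' w i) j x + pd (fun w => u' w j) i x)) :
    ∀ x ∈ Ω, ∑ i : Fin 3, ∑ j : Fin 3,
      pd (fun z => u' z i * σ z i j - u z i * σ' z i j) j x = 0 := by
  intro x hx
  obtain rfl : σ = stress η p u := funext fun z => funext₂ (hσ z)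
  obtain rfl : σ' = stress η p' u' := funext fun z => funext₂ (hσ' z)
  have hxΩ : Ω ∈ 𝓝 x := hΩ.mem_nhds hx
  have h : IsLocalSolution η u p x := ⟨hu.contDiffAt hxΩ,
    (hp.contDiffAt hxΩ).differentiableAt one_ne_zero, hstokes x hx, eventually_of_mem hxΩ hdiv⟩
  have h' : IsLocalSolution η u' p' x := ⟨hu'.contDiffAt hxΩ,
    (hp'.contDiffAt hxΩ).differentiableAt one_ne_zero, hstokes' x hx, eventually_of_mem hxΩ hdiv'⟩
  simp_rw [h.sum_pd_mul_stress_sub h', sum_sub_distrib, sum_sum_pd_mul_stress,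
    show divergence u x = 0 from hdiv x hx, show divergence u' x = 0 from hdiv' x hx,
    sum_sum_mul_add_transpose_comm (fun i j => pd (fun z => u' z i) j x)]
  ring

/-- Lorentz reciprocity.  If (u,p) and (u′,p′) both solve the Stokes system
−ηΔu + ∇p = 0, div u = 0 on an open set Ω ⊆ ℝ³ (u, u′ twice continuously differentiable,
p, p′ continuously differentiable), then with stress tensors
σ_ij = −p δ_ij + η(∂_j u_i + ∂_i u_j) (and likewise σ′), at every point of Ω one has
Σ_i Σ_j ∂_j (u′_i σ_ij − u_i σ′_ij) = 0. -/
theorem lorentz_reciprocity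
    (Ω : Set (EuclideanSpace ℝ (Fin 3))) (hΩ : IsOpen Ω) (η : ℝ) (hη : 0 < η)
    (u u' : EuclideanSpace ℝ (Fin 3) → EuclideanSpace ℝ (Fin 3))
    (p p' : EuclideanSpace ℝ (Fin 3) → ℝ)
    (hu : ContDiffOn ℝ 2 u Ω) (hu' : ContDiffOn ℝ 2 u' Ω)
    (hp : ContDiffOn ℝ 1 p Ω) (hp' : ContDiffOn ℝ 1 p' Ω)
    (hstokes : ∀ x ∈ Ω, ∀ i : Fin 3,
      -η * (∑ j : Fin 3, pd (fun z => pd (fun w => u w i) j z) j x) + pd p i x = 0)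
    (hdiv : ∀ x ∈ Ω, ∑ i : Fin 3, pd (fun z => u z i) i x = 0)
    (hstokes' : ∀ x ∈ Ω, ∀ i : Fin 3,
      -η * (∑ j : Fin 3, pd (fun z => pd (fun w => u' w i) j z) j x) + pd p' i x = 0)
    (hdiv' : ∀ x ∈ Ω, ∑ i : Fin 3, pd (fun z => u' z i) i x = 0)
    (σ σ' : EuclideanSpace ℝ (Fin 3) → Fin 3 → Fin 3 → ℝ)
    (hσ : ∀ x, ∀ i j : Fin 3, σ x i j =
      -(p x) * (if i = j then (1 : ℝ) else 0)
        + η * (pd (fun w => u w i) j x + pd (fun w => u w j) i x))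
    (hσ' : ∀ x, ∀ i j : Fin 3, σ' x i j =
      -(p' x) * (if i = j then (1 : ℝ) else 0)
        + η * (pd (fun w => u' w i) j x + pd (fun w => u' w j) i x)) :
    ∀ x ∈ Ω, ∑ i : Fin 3, ∑ j : Fin 3,
      pd (fun z => u' z i * σ z i j - u z i * σ' z i j) j x = 0 :=
  lorentz_reciprocity_general Ω hΩ η u u' p p' hu hu' hp hp' hstokes hdiv hstokes' hdiv' σ σ' hσ hσ'
end
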